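/- arXiv:2108.12429 — 8 statements merged into one kernel-verified Lean document; each statement's English description precedes it below -/
import Mathlib

section
/- Let w : ℤ^s → ℤ be a weight function. For a lattice path γ = (x_0, x_1, ..., x_t) with x_0 = 0, all x_i distinct, and x_{i+1} = x_i ± E_{v(i)} for each i, the Euler characteristic of the path lattice cohomology equals eu(ℍ*(γ,w)) = -w(x_0) + Σ_{i=0}^{t-1} max{0, w(x_i) - w(x_{i+1})}. -/
open Finset

/-- Number of connected components of `S_n ∩ T` for a lattice path with vertex
weights `W 0, …, W t`: a component corresponds to a "left endpoint" of a run of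
vertices of weight `≤ n` (the edge `[x_{i-1}, x_i]` has weight `max (W (i-1)) (W i)`). -/
def pathComp (W : ℕ → ℤ) (t : ℕ) (n : ℤ) : ℕ :=
  ((Finset.range (t + 1)).filter
    (fun i => W i ≤ n ∧ (i = 0 ∨ n < max (W (i - 1)) (W i)))).card

/-- The Euler characteristic `eu(ℍ*(γ,w)) = -m_γ + rank_ℤ ℍ⁰_red(γ,w)`, where
`m_γ = min_i w(x_i)` and `rank_ℤ ℍ⁰_red(γ,w) = Σ_{n ≥ m_γ} (#π₀(S_n ∩ T) - 1)`
(the terms vanish for `n ≥ max_i w(x_i)`, so the sum is finite). -/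
noncomputable def pathEu (W : ℕ → ℤ) (t : ℕ) : ℤ :=
  let m := ((Finset.range (t + 1)).image W).min' (Finset.nonempty_range_add_one.image W)
  let M := ((Finset.range (t + 1)).image W).max' (Finset.nonempty_range_add_one.image W)
  (-m) + ∑ n ∈ Finset.Icc m M, ((pathComp W t n : ℤ) - 1)

lemma pathEu_eq (W : ℕ → ℤ) (t : ℕ) :
    pathEu W t = -(W 0) + ∑ i ∈ Finset.range t, max 0 (W i - W (i + 1)) := by
  unfold pathEu
  set m := ((Finset.range (t + 1)).image W).min' (Finset.nonempty_range_add_one.image W) with hm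
  set M := ((Finset.range (t + 1)).image W).max' (Finset.nonempty_range_add_one.image W) with hM
  have hmem : ∀ i ≤ t, m ≤ W i ∧ W i ≤ M := by
    intro i hi
    have h : W i ∈ (Finset.range (t+1)).image W :=
      Finset.mem_image_of_mem W (Finset.mem_range.mpr (Nat.lt_succ_of_le hi))
    exact ⟨Finset.min'_le _ _ h, Finset.le_max' _ _ h⟩
  have hm0 := (hmem 0 (Nat.zero_le t)).1
  have hM0 := (hmem 0 (Nat.zero_le t)).2
  have hmM : m ≤ M := hm0.trans hM0
  show -m + ∑ n ∈ Finset.Icc m M, ((pathComp W t n : ℤ) - 1)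
      = -(W 0) + ∑ i ∈ Finset.range t, max 0 (W i - W (i + 1))
  have step1 : ∀ n : ℤ, (pathComp W t n : ℤ)
      = ∑ i ∈ Finset.range (t+1),
          (if W i ≤ n ∧ (i = 0 ∨ n < max (W (i-1)) (W i)) then (1:ℤ) else 0) := by
    intro n
    simp only [pathComp, Finset.card_filter, Nat.cast_sum,
      apply_ite (Nat.cast : ℕ → ℤ), Nat.cast_one, Nat.cast_zero]
  have hcard : (Finset.Icc m M).card = (M + 1 - m).toNat := Int.card_Icc m M
  have hsum : ∑ n ∈ Finset.Icc m M, (pathComp W t n : ℤ)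
      = (M - W 0 + 1) + ∑ i ∈ Finset.range t, max 0 (W i - W (i + 1)) := by
    rw [Finset.sum_congr rfl (fun n _ => step1 n), Finset.sum_comm]
    rw [Finset.sum_range_succ']
    have h0 : ∑ n ∈ Finset.Icc m M,
        (if W 0 ≤ n ∧ ((0:ℕ) = 0 ∨ n < max (W (0-1)) (W 0)) then (1:ℤ) else 0)
        = M - W 0 + 1 := by
      have : ∀ n ∈ Finset.Icc m M,
          (if W 0 ≤ n ∧ ((0:ℕ) = 0 ∨ n < max (W (0-1)) (W 0)) then (1:ℤ) else 0)
          = if n ∈ Finset.Icc (W 0) M then 1 else 0 := by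
        intro n hn
        simp only [Finset.mem_Icc] at hn ⊢
        by_cases h : W 0 ≤ n <;> simp [h, hn.2]
      rw [Finset.sum_congr rfl this, Finset.sum_ite_mem]
      have hsub0 : Finset.Icc (W 0) M ⊆ Finset.Icc m M := by
        intro n hn
        rw [Finset.mem_Icc] at hn ⊢
        exact ⟨hm0.trans hn.1, hn.2⟩
      rw [Finset.inter_eq_right.mpr hsub0, Finset.sum_const, Int.card_Icc]
      simp [Int.toNat_of_nonneg (by linarith : (0:ℤ) ≤ M + 1 - W 0)]
      ring
    rw [h0]
    have hterm : ∀ i ∈ Finset.range t,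
        (∑ n ∈ Finset.Icc m M,
          (if W (i+1) ≤ n ∧ ((i+1 : ℕ) = 0 ∨ n < max (W (i+1-1)) (W (i+1))) then (1:ℤ) else 0))
        = max 0 (W i - W (i + 1)) := by
      intro i hi
      rw [Finset.mem_range] at hi
      have hWi := hmem i (le_of_lt hi)
      have hWi1 := hmem (i+1) hi
      have : ∀ n ∈ Finset.Icc m M,
          (if W (i+1) ≤ n ∧ ((i+1 : ℕ) = 0 ∨ n < max (W (i+1-1)) (W (i+1))) then (1:ℤ) else 0)
          = if n ∈ Finset.Ico (W (i+1)) (W i) then 1 else 0 := by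
        intro n hn
        simp only [Finset.mem_Icc] at hn
        simp only [Nat.add_sub_cancel, Finset.mem_Ico]
        by_cases h1 : W (i+1) ≤ n
        · by_cases h2 : n < W i
          · simp [h1, h2, Or.inr (lt_max_of_lt_left h2)]
          · have : ¬ n < max (W i) (W (i+1)) := by
              simp only [lt_max_iff, not_or, not_lt]
              exact ⟨not_lt.mp h2, h1⟩
            simp [h1, h2, this]
        · simp [h1]
      rw [Finset.sum_congr rfl this, Finset.sum_ite_mem]
      have hsub : Finset.Ico (W (i+1)) (W i) ⊆ Finset.Icc m M := by
        intro n hn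
        rw [Finset.mem_Ico] at hn
        rw [Finset.mem_Icc]
        exact ⟨hWi1.1.trans hn.1, le_of_lt (lt_of_lt_of_le hn.2 hWi.2)⟩
      rw [Finset.inter_eq_right.mpr hsub, Finset.sum_const, Int.card_Ico]
      simp [Int.toNat_eq_max, max_comm]
    rw [Finset.sum_congr rfl hterm]
    ring
  rw [Finset.sum_sub_distrib, hsum, Finset.sum_const, hcard]
  have : ((M + 1 - m).toNat : ℤ) = M + 1 - m :=
    Int.toNat_of_nonneg (by linarith)
  simp only [nsmul_eq_mul, mul_one, this]
  ring


/-- For a lattice path `γ = (x_0, …, x_t)` in `ℤ^s` with `x_0 = 0`, all `x_i` distinct,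
and `x_{i+1} = x_i ± E_{v(i)}`, one has
`eu(ℍ*(γ,w)) = -w(x_0) + Σ_{i=0}^{t-1} max{0, w(x_i) - w(x_{i+1})}`. -/
theorem path_euler_characteristic (s t : ℕ) (w : (Fin s → ℤ) → ℤ)
    (x : ℕ → Fin s → ℤ)
    (hx0 : x 0 = 0)
    (hinj : ∀ i ≤ t, ∀ j ≤ t, x i = x j → i = j)
    (hstep : ∀ i < t, ∃ v : Fin s,
      x (i + 1) = x i + Pi.single v 1 ∨ x (i + 1) = x i - Pi.single v 1) :
    pathEu (fun i => w (x i)) t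
      = -(w (x 0)) + ∑ i ∈ Finset.range t, max 0 (w (x i) - w (x (i + 1))) := by
  exact pathEu_eq (fun i => w (x i)) t
end

section
/- Let h : R(0,c) → ℤ be increasing with h(0) = 0, h° : R(0,c) → ℤ decreasing, and w(l) = h(l) + h°(l) - h°(0). For any increasing lattice path γ = (x_0 = 0, x_1, ..., x_t = c) with x_{i+1} = x_i + E_{v(i)}, one has 0 ≤ eu(ℍ^0(γ,w)) ≤ h°(0) - h°(c), where eu(ℍ^0(γ,w)) = -min_i w(x_i) + rank ℍ^0_red(γ,w) = -w(0) + Σ_i max{0, w(x_i) - w(x_{i+1})}. -/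
/-- Let `h : R(0,c) → ℤ` be increasing with `h 0 = 0`, `h° : R(0,c) → ℤ` decreasing,
and `w = h + h° - h°(0)`.  For any increasing lattice path
`γ = (x_0 = 0, x_1, …, x_t = c)` with `x_{i+1} = x_i + E_{v(i)}`, one has
`0 ≤ eu(ℍ⁰(γ,w)) ≤ h°(0) - h°(c)`, where
`eu(ℍ⁰(γ,w)) = -w(x_0) + Σ_i max{0, w(x_i) - w(x_{i+1})}`. -/
theorem path_eu_bounds (s t : ℕ) (c : Fin s → ℤ)
    (hc : (fun _ => (1 : ℤ)) ≤ c)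
    (h hcirc : (Fin s → ℤ) → ℤ)
    (hh0 : h 0 = 0)
    (hinc : ∀ (l : Fin s → ℤ) (v : Fin s), 0 ≤ l → l + Pi.single v 1 ≤ c →
      h l ≤ h (l + Pi.single v 1))
    (hdec : ∀ (l : Fin s → ℤ) (v : Fin s), 0 ≤ l → l + Pi.single v 1 ≤ c →
      hcirc (l + Pi.single v 1) ≤ hcirc l)
    (w : (Fin s → ℤ) → ℤ) (hw : ∀ l, w l = h l + hcirc l - hcirc 0)
    (x : ℕ → Fin s → ℤ)
    (hx0 : x 0 = 0) (hxt : x t = c)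
    (hstep : ∀ i < t, ∃ v : Fin s, x (i + 1) = x i + Pi.single v 1) :
    0 ≤ -(w (x 0)) + ∑ i ∈ Finset.range t, max 0 (w (x i) - w (x (i + 1))) ∧
    -(w (x 0)) + ∑ i ∈ Finset.range t, max 0 (w (x i) - w (x (i + 1)))
      ≤ hcirc 0 - hcirc c := by
  have hw0 : w (x 0) = 0 := by rw [hx0, hw, hh0]; ring
  -- nonnegativity of path points
  have hpos : ∀ i ≤ t, 0 ≤ x i := by
    intro i hi
    induction i with
    | zero => rw [hx0]
    | succ n ih =>
      have hnt : n < t := Nat.lt_of_succ_le hi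
      obtain ⟨v, hv⟩ := hstep n hnt
      have h0n := ih (Nat.le_of_lt hnt)
      rw [hv]
      intro j
      have : (0:ℤ) ≤ (Pi.single v 1 : Fin s → ℤ) j := by
        rcases eq_or_ne j v with rfl | hne
        · simp
        · simp [Pi.single_apply, hne]
      have := add_le_add (h0n j) this
      simpa using this
  -- steps are monotone
  have hstepmono : ∀ i < t, x i ≤ x (i + 1) := by
    intro i hi
    obtain ⟨v, hv⟩ := hstep i hi
    rw [hv]
    intro j
    have : (0:ℤ) ≤ (Pi.single v 1 : Fin s → ℤ) j := by
      rcases eq_or_ne j v with rfl | hne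
      · simp
      · simp [Pi.single_apply, hne]
    have := add_le_add (le_refl (x i j)) this
    simpa using this
  have hmono : ∀ i j, i ≤ j → j ≤ t → x i ≤ x j := by
    intro i j hij hjt
    induction j with
    | zero => simp_all
    | succ n ih =>
      rcases Nat.lt_or_ge i (n+1) with hlt | hge
      · have h1 : x i ≤ x n := ih (Nat.lt_succ_iff.mp hlt) (Nat.le_of_succ_le hjt)
        exact le_trans h1 (hstepmono n (Nat.lt_of_succ_le hjt))
      · have : i = n + 1 := le_antisymm hij hge
        subst this; exact le_refl _
  have hlec : ∀ i ≤ t, x i ≤ c := by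
    intro i hi
    have := hmono i t hi (le_refl t)
    rwa [hxt] at this
  -- termwise bound
  have hterm : ∀ i ∈ Finset.range t,
      max 0 (w (x i) - w (x (i + 1))) ≤ hcirc (x i) - hcirc (x (i + 1)) := by
    intro i hi
    rw [Finset.mem_range] at hi
    obtain ⟨v, hv⟩ := hstep i hi
    have h0i := hpos i (Nat.le_of_lt hi)
    have hic : x i + Pi.single v 1 ≤ c := by rw [← hv]; exact hlec (i+1) hi
    have hinc' := hinc (x i) v h0i hic
    have hdec' := hdec (x i) v h0i hic
    rw [← hv] at hinc' hdec'
    apply max_le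
    · linarith
    · rw [hw (x i), hw (x (i+1))]; linarith
  constructor
  · rw [hw0, neg_zero, zero_add]
    exact Finset.sum_nonneg fun i _ => le_max_left _ _
  · have hsum := Finset.sum_le_sum hterm
    have htel : ∑ i ∈ Finset.range t, (hcirc (x i) - hcirc (x (i + 1)))
        = hcirc (x 0) - hcirc (x t) := Finset.sum_range_sub' (fun i => hcirc (x i)) t
    rw [hw0, neg_zero, zero_add]
    rw [htel, hx0, hxt] at hsum
    exact hsum
end

section
/- With notation as above (h increasing with h(0)=0, h° decreasing, w = h + h° - h°(0)), for an increasing path γ from 0 to c, the equality eu(ℍ^0(γ,w)) = h°(0) - h°(c) holds if and only if for every step i of the path, the quantities h(x_{i+1}) - h(x_i) and h°(x_i) - h°(x_{i+1}) are not simultaneously nonzero. -/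
/-- With `h` increasing, `h 0 = 0`, `h°` decreasing and `w = h + h° - h°(0)`, for an
increasing path `γ = (x_0 = 0, …, x_t = c)` the equality
`eu(ℍ⁰(γ,w)) = h°(0) - h°(c)` holds if and only if for every step `i` the quantities
`h(x_{i+1}) - h(x_i)` and `h°(x_i) - h°(x_{i+1})` are not simultaneously nonzero. -/
theorem path_eu_equality_iff (s t : ℕ) (c : Fin s → ℤ)
    (hc : (fun _ => (1 : ℤ)) ≤ c)
    (h hcirc : (Fin s → ℤ) → ℤ)
    (hh0 : h 0 = 0)
    (hinc : ∀ (l : Fin s → ℤ) (v : Fin s), 0 ≤ l → l + Pi.single v 1 ≤ c →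
      h l ≤ h (l + Pi.single v 1))
    (hdec : ∀ (l : Fin s → ℤ) (v : Fin s), 0 ≤ l → l + Pi.single v 1 ≤ c →
      hcirc (l + Pi.single v 1) ≤ hcirc l)
    (w : (Fin s → ℤ) → ℤ) (hw : ∀ l, w l = h l + hcirc l - hcirc 0)
    (x : ℕ → Fin s → ℤ)
    (hx0 : x 0 = 0) (hxt : x t = c)
    (hstep : ∀ i < t, ∃ v : Fin s, x (i + 1) = x i + Pi.single v 1) :
    (-(w (x 0)) + ∑ i ∈ Finset.range t, max 0 (w (x i) - w (x (i + 1)))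
        = hcirc 0 - hcirc c) ↔
      ∀ i < t, h (x (i + 1)) - h (x i) = 0 ∨ hcirc (x i) - hcirc (x (i + 1)) = 0 := by
  -- nonnegativity of path points
  have hnonneg : ∀ i ≤ t, (0 : Fin s → ℤ) ≤ x i := by
    intro i
    induction i with
    | zero => intro _; rw [hx0]
    | succ n ih =>
      intro hle
      obtain ⟨v, hv⟩ := hstep n (by omega)
      have h1 := ih (by omega)
      rw [hv]
      intro j
      have h2 := h1 j
      have h3 : (0 : ℤ) ≤ (Pi.single v 1 : Fin s → ℤ) j := by
        rcases eq_or_ne j v with rfl | hne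
        · simp
        · simp [Pi.single_apply, hne]
      simpa using add_nonneg h2 h3
  -- monotonicity towards c
  have hmono : ∀ d i, i + d ≤ t → x i ≤ x (i + d) := by
    intro d
    induction d with
    | zero => intro i _; simp
    | succ n ih =>
      intro i hle
      have h1 := ih (i + 1) (by omega)
      obtain ⟨v, hv⟩ := hstep i (by omega)
      have h2 : x i ≤ x (i + 1) := by
        rw [hv]
        intro j
        have h3 : (0 : ℤ) ≤ (Pi.single v 1 : Fin s → ℤ) j := by
          rcases eq_or_ne j v with rfl | hne
          · simp
          · simp [Pi.single_apply, hne]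
        simpa using add_le_add_left h3 (x i j)
      have : i + 1 + n = i + (n + 1) := by omega
      rw [this] at h1
      exact le_trans h2 h1
  have hlec : ∀ i ≤ t, x i ≤ c := by
    intro i hi
    have := hmono (t - i) i (by omega)
    have heq : i + (t - i) = t := by omega
    rw [heq, hxt] at this
    exact this
  -- step quantities
  have ha : ∀ i < t, 0 ≤ h (x (i + 1)) - h (x i) := by
    intro i hi
    obtain ⟨v, hv⟩ := hstep i hi
    have := hinc (x i) v (hnonneg i (by omega)) (by rw [← hv]; exact hlec (i + 1) (by omega))
    rw [hv]; omega
  have hb : ∀ i < t, 0 ≤ hcirc (x i) - hcirc (x (i + 1)) := by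
    intro i hi
    obtain ⟨v, hv⟩ := hstep i hi
    have := hdec (x i) v (hnonneg i (by omega)) (by rw [← hv]; exact hlec (i + 1) (by omega))
    rw [hv]; omega
  -- w at 0
  have hw0 : w (x 0) = 0 := by rw [hx0, hw, hh0]; ring
  -- telescoping sum
  have htel : ∑ i ∈ Finset.range t, (hcirc (x i) - hcirc (x (i + 1)))
      = hcirc 0 - hcirc c := by
    rw [Finset.sum_range_sub' (fun i => hcirc (x i)), hx0, hxt]
  -- rewrite each summand
  have hterm : ∀ i, w (x i) - w (x (i + 1))
      = (hcirc (x i) - hcirc (x (i + 1))) - (h (x (i + 1)) - h (x i)) := by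
    intro i; rw [hw, hw]; ring
  rw [hw0, neg_zero, zero_add, ← htel]
  have hle : ∀ i ∈ Finset.range t,
      max 0 (w (x i) - w (x (i + 1))) ≤ hcirc (x i) - hcirc (x (i + 1)) := by
    intro i hi
    rw [Finset.mem_range] at hi
    have h1 := ha i hi
    have h2 := hb i hi
    rw [hterm i]
    rcases max_cases 0 ((hcirc (x i) - hcirc (x (i + 1))) - (h (x (i + 1)) - h (x i))) with
      ⟨he, _⟩ | ⟨he, _⟩ <;> rw [he] <;> omega
  rw [Finset.sum_eq_sum_iff_of_le hle]
  constructor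
  · intro H i hi
    have := H i (Finset.mem_range.mpr hi)
    have h1 := ha i hi
    have h2 := hb i hi
    rw [hterm i] at this
    rcases max_cases 0 ((hcirc (x i) - hcirc (x (i + 1))) - (h (x (i + 1)) - h (x i))) with
      ⟨he, _⟩ | ⟨he, _⟩ <;> rw [he] at this <;> omega
  · intro H i hi
    rw [Finset.mem_range] at hi
    have h1 := ha i hi
    have h2 := hb i hi
    rcases H i hi with he | he <;> rw [hterm i]
    · rw [he, sub_zero]
      exact max_eq_right h2
    · rw [he]
      have : (0 : ℤ) - (h (x (i + 1)) - h (x i)) ≤ 0 := by omega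
      rw [max_eq_left this]
end

section
/- Let h : R(0,c) → ℤ be increasing with h(0)=0 satisfying the stability property, and h° decreasing, such that the pair (h, h°) satisfies the Combinatorial Duality Property: for no l, l+E_v ∈ R(0,c) are both h(l+E_v)-h(l) and h°(l)-h°(l+E_v) nonzero. Then for every increasing path γ from 0 to c, eu(ℍ^0(γ,w)) = h°(0) - h°(c), where w = h + h° - h°(0). In particular the path Euler characteristic is independent of the choice of increasing path. -/
/-- Let `h` be increasing with `h 0 = 0` satisfying the stability property and `h°`
decreasing, such that the pair `(h, h°)` satisfies the Combinatorial Duality Property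
(for no `l, l+E_v ∈ R(0,c)` are both `h(l+E_v)-h(l)` and `h°(l)-h°(l+E_v)` nonzero).
Then for every increasing path `γ` from `0` to `c`:
`eu(ℍ⁰(γ,w)) = h°(0) - h°(c)` where `w = h + h° - h°(0)`; in particular the path
Euler characteristic is independent of the choice of increasing path. -/
theorem path_eu_coincidence (s : ℕ) (c : Fin s → ℤ)
    (hc : (fun _ => (1 : ℤ)) ≤ c)
    (h hcirc : (Fin s → ℤ) → ℤ)
    (hh0 : h 0 = 0)
    (hinc : ∀ (l : Fin s → ℤ) (v : Fin s), 0 ≤ l → l + Pi.single v 1 ≤ c →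
      h l ≤ h (l + Pi.single v 1))
    (hdec : ∀ (l : Fin s → ℤ) (v : Fin s), 0 ≤ l → l + Pi.single v 1 ≤ c →
      hcirc (l + Pi.single v 1) ≤ hcirc l)
    (hstab : ∀ (l : Fin s → ℤ) (v : Fin s) (lbar : Fin s → ℤ),
      0 ≤ l → l + Pi.single v 1 ≤ c → 0 ≤ lbar → lbar v = 0 →
      l + lbar + Pi.single v 1 ≤ c →
      h l = h (l + Pi.single v 1) →
      h (l + lbar) = h (l + lbar + Pi.single v 1))
    (hCDP : ∀ (l : Fin s → ℤ) (v : Fin s), 0 ≤ l → l + Pi.single v 1 ≤ c →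
      h (l + Pi.single v 1) - h l = 0 ∨ hcirc l - hcirc (l + Pi.single v 1) = 0)
    (w : (Fin s → ℤ) → ℤ) (hw : ∀ l, w l = h l + hcirc l - hcirc 0) :
    ∀ (t : ℕ) (x : ℕ → Fin s → ℤ),
      x 0 = 0 → x t = c →
      (∀ i < t, ∃ v : Fin s, x (i + 1) = x i + Pi.single v 1) →
      -(w (x 0)) + ∑ i ∈ Finset.range t, max 0 (w (x i) - w (x (i + 1)))
        = hcirc 0 - hcirc c := by
  intro t x hx0 hxt hstep
  have hsingle : ∀ v : Fin s, (0 : Fin s → ℤ) ≤ Pi.single v 1 := by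
    intro v k
    rcases eq_or_ne k v with rfl | hk <;> simp [Pi.single_apply, *]
  have hmono : ∀ i j, i ≤ j → j ≤ t → x i ≤ x j := by
    intro i j hij hjt
    induction j with
    | zero => simp [Nat.le_zero.mp hij]
    | succ n ih =>
      rcases Nat.lt_or_ge i (n + 1) with hlt | hge
      · obtain ⟨v, hv⟩ := hstep n (by omega)
        calc x i ≤ x n := ih (by omega) (by omega)
          _ ≤ x (n + 1) := by rw [hv]; exact le_add_of_nonneg_right (hsingle v)
      · have : i = n + 1 := by omega
        subst this; exact le_refl _
  have hnonneg : ∀ i, i ≤ t → 0 ≤ x i := fun i hi => hx0 ▸ hmono 0 i (Nat.zero_le _) hi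
  have key : ∀ i ∈ Finset.range t,
      max 0 (w (x i) - w (x (i + 1))) = hcirc (x i) - hcirc (x (i + 1)) := by
    intro i hi
    rw [Finset.mem_range] at hi
    obtain ⟨v, hv⟩ := hstep i hi
    have h0 : 0 ≤ x i := hnonneg i (by omega)
    have hle : x i + Pi.single v 1 ≤ c := by
      rw [← hv, ← hxt]; exact hmono (i + 1) t (by omega) le_rfl
    have hwd : w (x i) - w (x (i + 1)) =
        (h (x i) - h (x (i + 1))) + (hcirc (x i) - hcirc (x (i + 1))) := by
      rw [hw, hw]; ring
    rcases hCDP (x i) v h0 hle with hz | hz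
    · rw [← hv] at hz
      have hd : hcirc (x (i + 1)) ≤ hcirc (x i) := by rw [hv]; exact hdec (x i) v h0 hle
      have : w (x i) - w (x (i + 1)) = hcirc (x i) - hcirc (x (i + 1)) := by
        rw [hwd]; omega
      rw [this, max_eq_right (by omega)]
    · rw [← hv] at hz
      have hhle : h (x i) ≤ h (x (i + 1)) := by rw [hv]; exact hinc (x i) v h0 hle
      have : w (x i) - w (x (i + 1)) = h (x i) - h (x (i + 1)) := by
        rw [hwd]; omega
      rw [this, max_eq_left (by omega), hz]
  rw [Finset.sum_congr rfl key, Finset.sum_range_sub' (fun i => hcirc (x i)), hx0, hxt]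
  have : w 0 = 0 := by rw [hw]; simp [hh0]
  rw [this]; ring
end

section
/- For a rectangle T = [0,c] in ℤ^s with compatible weight functions w, the alternating sum over all cubes □_q ⊆ T of (-1)^{q+1} w(□_q) equals the Euler characteristic eu(ℍ*(T,w)) = -min{w(l) : l ∈ T ∩ ℤ^s} + Σ_q (-1)^q rank_ℤ ℍ^q_red(T,w). -/
open scoped Classical

/-- `E_I = Σ_{v ∈ I} E_v`. -/
def EI (s : ℕ) (I : Finset (Fin s)) : Fin s → ℤ := fun v => if v ∈ I then 1 else 0

/-- The weight of the cube `(l, I)`: `w((l,I)) = max_{I' ⊆ I} w₀(l + E_{I'})`. -/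
noncomputable def cubeW (s : ℕ) (w0 : (Fin s → ℤ) → ℤ)
    (l : Fin s → ℤ) (I : Finset (Fin s)) : ℤ :=
  (I.powerset.image (fun I' => w0 (l + EI s I'))).max'
    (Finset.Nonempty.image ⟨∅, Finset.empty_mem_powerset I⟩ _)

/-- The combinatorial Euler characteristic of `S_n ⊆ T = [0,c]`, the union of the cubes
of weight `≤ n`:  `χ(S_n) = Σ_{(l,I) ⊆ T, w((l,I)) ≤ n} (-1)^{|I|}`; since the `S_n` are
finite cubical complexes this equals `Σ_q (-1)^q rank H^q(S_n,ℤ)`. -/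
noncomputable def chiS (s : ℕ) (c : Fin s → ℤ) (w0 : (Fin s → ℤ) → ℤ) (n : ℤ) : ℤ :=
  ∑ l ∈ Finset.Icc (0 : Fin s → ℤ) c, ∑ I : Finset (Fin s),
    if l + EI s I ≤ c ∧ cubeW s w0 l I ≤ n then (-1 : ℤ) ^ I.card else 0

/-- The Euler characteristic of the lattice cohomology of the rectangle `T = [0,c]`:
`eu(ℍ*(T,w)) = -min{w(l) : l ∈ T ∩ ℤ^s} + Σ_q (-1)^q rank_ℤ ℍ^q_red(T,w)`, where
`Σ_q (-1)^q rank_ℤ ℍ^q_red(T,w) = Σ_n (χ(S_n) - 1)` (reduced cohomology of the finite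
cubical complexes `S_n`; all terms with `n ≥ max w` vanish since then `S_n = T`). -/
noncomputable def latticeEu (s : ℕ) (c : Fin s → ℤ) (hc : (0 : Fin s → ℤ) ≤ c)
    (w0 : (Fin s → ℤ) → ℤ) : ℤ :=
  let m := ((Finset.Icc (0 : Fin s → ℤ) c).image w0).min'
    (Finset.Nonempty.image (Finset.nonempty_Icc.mpr hc) w0)
  let M := ((Finset.Icc (0 : Fin s → ℤ) c).image w0).max'
    (Finset.Nonempty.image (Finset.nonempty_Icc.mpr hc) w0)
  (-m) + ∑ n ∈ Finset.Icc m M, (chiS s c w0 n - 1)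

lemma EI_nonneg (s : ℕ) (I : Finset (Fin s)) : (0 : Fin s → ℤ) ≤ EI s I := by
  intro v
  simp only [EI, Pi.zero_apply]
  split <;> norm_num

lemma EI_le_one (s : ℕ) (I : Finset (Fin s)) (v : Fin s) : EI s I v ≤ 1 := by
  simp only [EI]; split <;> norm_num

lemma EI_mono (s : ℕ) {I' I : Finset (Fin s)} (h : I' ⊆ I) : EI s I' ≤ EI s I := by
  intro v
  simp only [EI]
  split
  · rename_i hv; simp [h hv]
  · split <;> norm_num

/-- The Euler characteristic of the full rectangle `T = [0,c]` is `1`. -/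
lemma euler_sum (s : ℕ) (c : Fin s → ℤ) (hc : (0 : Fin s → ℤ) ≤ c) :
    ∑ l ∈ Finset.Icc (0 : Fin s → ℤ) c, ∑ I : Finset (Fin s),
      (if l + EI s I ≤ c then (-1 : ℤ) ^ I.card else 0) = 1 := by
  rw [Finset.sum_comm]
  have step1 : ∀ I : Finset (Fin s),
      ∑ l ∈ Finset.Icc (0 : Fin s → ℤ) c, (if l + EI s I ≤ c then (-1 : ℤ) ^ I.card else 0)
      = (-1 : ℤ) ^ I.card * ∏ v, (c v + 1 - EI s I v) := by
    intro I
    rw [Finset.sum_ite, Finset.sum_const_zero, add_zero, Finset.sum_const]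
    have hfil : (Finset.Icc (0 : Fin s → ℤ) c).filter (fun l => l + EI s I ≤ c)
        = Finset.Icc (0 : Fin s → ℤ) (c - EI s I) := by
      ext l
      simp only [Finset.mem_filter, Finset.mem_Icc, Pi.le_def, Pi.add_apply, Pi.sub_apply,
        Pi.zero_apply]
      constructor
      · rintro ⟨⟨h0, -⟩, h⟩
        exact ⟨h0, fun v => by have := h v; omega⟩
      · rintro ⟨h0, h⟩
        have hE : ∀ v, 0 ≤ EI s I v := fun v => EI_nonneg s I v
        exact ⟨⟨h0, fun v => by have := h v; have := hE v; omega⟩, fun v => by have := h v; omega⟩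
    rw [hfil, Pi.card_Icc]
    have hcard : ((∏ v, (Finset.Icc ((0 : Fin s → ℤ) v) ((c - EI s I) v)).card : ℕ) : ℤ)
        = ∏ v, (c v + 1 - EI s I v) := by
      push_cast
      refine Finset.prod_congr rfl fun v _ => ?_
      rw [Int.card_Icc]
      have h1 := EI_le_one s I v
      have h0 := hc v
      rw [Int.toNat_of_nonneg (by simp only [Pi.sub_apply, Pi.zero_apply] at *; omega)]
      simp only [Pi.sub_apply, Pi.zero_apply]
      ring
    rw [nsmul_eq_mul, hcard, mul_comm]
  rw [Finset.sum_congr rfl fun I _ => step1 I]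
  have hprod : ∀ I : Finset (Fin s),
      (-1 : ℤ) ^ I.card * ∏ v, (c v + 1 - EI s I v)
      = (∏ v ∈ I, (-(c v))) * ∏ v ∈ Finset.univ \ I, (c v + 1) := by
    intro I
    have h : ∀ v, c v + 1 - EI s I v = if v ∈ I then c v else c v + 1 := by
      intro v; simp only [EI]; split <;> ring
    simp_rw [h]
    rw [Finset.prod_ite, Finset.filter_mem_eq_inter, Finset.univ_inter,
      ← Finset.sdiff_eq_filter]
    have : ∏ v ∈ I, (-(c v)) = (-1 : ℤ) ^ I.card * ∏ v ∈ I, c v := by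
      calc ∏ v ∈ I, (-(c v)) = ∏ v ∈ I, ((-1 : ℤ) * c v) := by simp only [neg_one_mul]
        _ = (∏ _v ∈ I, (-1 : ℤ)) * ∏ v ∈ I, c v := Finset.prod_mul_distrib
        _ = (-1 : ℤ) ^ I.card * ∏ v ∈ I, c v := by rw [Finset.prod_const]
    rw [this, mul_assoc]
  rw [Finset.sum_congr rfl fun I _ => hprod I]
  have := Finset.prod_add (fun v : Fin s => -(c v)) (fun v : Fin s => c v + 1) Finset.univ
  simp only [neg_add_cancel_left, Finset.prod_const_one] at this
  rw [← Finset.powerset_univ]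
  exact this.symm

/-- Summing an indicator `[w ≤ n]` over `n ∈ [m, M]` counts `M - w + 1`. -/
lemma sum_indicator_Icc (m M w x : ℤ) (hmw : m ≤ w) (hwM : w ≤ M) :
    ∑ n ∈ Finset.Icc m M, (if w ≤ n then x else 0) = (M - w + 1) * x := by
  rw [Finset.sum_ite, Finset.sum_const_zero, add_zero, Finset.sum_const]
  have hfil : (Finset.Icc m M).filter (fun n => w ≤ n) = Finset.Icc w M := by
    ext n
    simp only [Finset.mem_filter, Finset.mem_Icc]
    omega
  rw [hfil, Int.card_Icc, nsmul_eq_mul, Int.toNat_of_nonneg (by omega)]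
  ring

/-- For the rectangle `T = [0,c]` with compatible weight functions `w`, the alternating
sum `Σ_{□_q ⊆ T} (-1)^{q+1} w(□_q)` equals `eu(ℍ*(T,w))`. -/
theorem alternating_weight_sum_eq_eu (s : ℕ) (c : Fin s → ℤ)
    (hc : (0 : Fin s → ℤ) ≤ c) (w0 : (Fin s → ℤ) → ℤ) :
    (∑ l ∈ Finset.Icc (0 : Fin s → ℤ) c, ∑ I : Finset (Fin s),
        if l + EI s I ≤ c then (-1 : ℤ) ^ (I.card + 1) * cubeW s w0 l I else 0)
      = latticeEu s c hc w0 := by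
  classical
  have hne : ((Finset.Icc (0 : Fin s → ℤ) c).image w0).Nonempty :=
    Finset.Nonempty.image (Finset.nonempty_Icc.mpr hc) w0
  set m := ((Finset.Icc (0 : Fin s → ℤ) c).image w0).min'
    (Finset.Nonempty.image (Finset.nonempty_Icc.mpr hc) w0) with hm_def
  set M := ((Finset.Icc (0 : Fin s → ℤ) c).image w0).max'
    (Finset.Nonempty.image (Finset.nonempty_Icc.mpr hc) w0) with hM_def
  have hEu : latticeEu s c hc w0 = -m + ∑ n ∈ Finset.Icc m M, (chiS s c w0 n - 1) := rfl
  have hmM : m ≤ M := Finset.min'_le _ _ (Finset.max'_mem _ hne)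
  -- bounds on cube weights
  have hW : ∀ l ∈ Finset.Icc (0 : Fin s → ℤ) c, ∀ I : Finset (Fin s), l + EI s I ≤ c →
      m ≤ cubeW s w0 l I ∧ cubeW s w0 l I ≤ M := by
    intro l hl I hI
    constructor
    · have h0 : w0 (l + EI s ∅) ∈ I.powerset.image (fun I' => w0 (l + EI s I')) :=
        Finset.mem_image_of_mem _ (Finset.empty_mem_powerset I)
      refine le_trans ?_ (Finset.le_max' _ _ h0)
      have hz : l + EI s ∅ = l := by funext v; simp [EI]
      rw [hz]
      exact Finset.min'_le _ _ (Finset.mem_image_of_mem w0 hl)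
    · apply Finset.max'_le
      intro y hy
      obtain ⟨I', hI', rfl⟩ := Finset.mem_image.mp hy
      apply Finset.le_max'
      apply Finset.mem_image_of_mem
      rw [Finset.mem_Icc] at hl ⊢
      refine ⟨?_, ?_⟩
      · intro v
        have := hl.1 v
        have := EI_nonneg s I' v
        simp only [Pi.add_apply, Pi.zero_apply] at *
        omega
      · calc l + EI s I' ≤ l + EI s I := by
              intro v
              have := EI_mono s (Finset.mem_powerset.mp hI') v
              simp only [Pi.add_apply] at *
              omega
          _ ≤ c := hI
  -- compute the sum of Euler characteristics
  have hchi : ∑ n ∈ Finset.Icc m M, chiS s c w0 n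
      = ∑ l ∈ Finset.Icc (0 : Fin s → ℤ) c, ∑ I : Finset (Fin s),
          (if l + EI s I ≤ c then (M - cubeW s w0 l I + 1) * (-1 : ℤ) ^ I.card else 0) := by
    unfold chiS
    rw [Finset.sum_comm]
    refine Finset.sum_congr rfl fun l hl => ?_
    rw [Finset.sum_comm]
    refine Finset.sum_congr rfl fun I _ => ?_
    by_cases h : l + EI s I ≤ c
    · simp only [h, true_and, if_true]
      exact sum_indicator_Icc m M _ _ (hW l hl I h).1 (hW l hl I h).2
    · simp [h]
  -- split the inner expression
  have hsplit : ∀ l ∈ Finset.Icc (0 : Fin s → ℤ) c, ∀ I : Finset (Fin s),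
      (if l + EI s I ≤ c then (M - cubeW s w0 l I + 1) * (-1 : ℤ) ^ I.card else 0)
      = (M + 1) * (if l + EI s I ≤ c then (-1 : ℤ) ^ I.card else 0)
        - (if l + EI s I ≤ c then (-1 : ℤ) ^ I.card * cubeW s w0 l I else 0) := by
    intro l _ I
    split <;> ring
  have hchi2 : ∑ n ∈ Finset.Icc m M, chiS s c w0 n
      = (M + 1) * (∑ l ∈ Finset.Icc (0 : Fin s → ℤ) c, ∑ I : Finset (Fin s),
            (if l + EI s I ≤ c then (-1 : ℤ) ^ I.card else 0))
        - ∑ l ∈ Finset.Icc (0 : Fin s → ℤ) c, ∑ I : Finset (Fin s),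
            (if l + EI s I ≤ c then (-1 : ℤ) ^ I.card * cubeW s w0 l I else 0) := by
    rw [hchi, Finset.mul_sum, ← Finset.sum_sub_distrib]
    refine Finset.sum_congr rfl fun l hl => ?_
    rw [Finset.mul_sum, ← Finset.sum_sub_distrib]
    exact Finset.sum_congr rfl fun I _ => hsplit l hl I
  rw [euler_sum s c hc] at hchi2
  -- the left-hand side is minus the weighted sum
  have hLHS : (∑ l ∈ Finset.Icc (0 : Fin s → ℤ) c, ∑ I : Finset (Fin s),
        if l + EI s I ≤ c then (-1 : ℤ) ^ (I.card + 1) * cubeW s w0 l I else 0)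
      = - ∑ l ∈ Finset.Icc (0 : Fin s → ℤ) c, ∑ I : Finset (Fin s),
            (if l + EI s I ≤ c then (-1 : ℤ) ^ I.card * cubeW s w0 l I else 0) := by
    rw [← Finset.sum_neg_distrib]
    refine Finset.sum_congr rfl fun l _ => ?_
    rw [← Finset.sum_neg_distrib]
    refine Finset.sum_congr rfl fun I _ => ?_
    split <;> ring
  -- the constant sum
  have hconst : ∑ n ∈ Finset.Icc m M, (chiS s c w0 n - 1)
      = (∑ n ∈ Finset.Icc m M, chiS s c w0 n) - (M - m + 1) := by
    rw [Finset.sum_sub_distrib, Finset.sum_const, Int.card_Icc, nsmul_eq_mul,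
      Int.toNat_of_nonneg (by omega)]
    ring
  rw [hEu, hconst, hchi2, hLHS]
  ring
end

section
/- Let L be a negative definite lattice with dual L', and fix h ∈ H = L'/L. The set {l' ∈ L' : [l'] = h} ∩ S', where S' is the Lipman cone, has a unique minimal element s_h with respect to the coordinatewise partial order. Moreover s_h ≥ r_h, where r_h is the unique representative of h with all coordinates in [0,1). -/
open Matrix

section LipmanAux

lemma aux_mulVec_coord_le {s : ℕ} (A : Matrix (Fin s) (Fin s) ℚ)
    (hA : ∀ v w, v ≠ w → 0 ≤ A v w) (x m : Fin s → ℚ)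
    (hle : ∀ w, m w ≤ x w) (v : Fin s) (heq : m v = x v) :
    (A *ᵥ m) v ≤ (A *ᵥ x) v := by
  simp only [Matrix.mulVec, dotProduct]
  apply Finset.sum_le_sum
  intro w _
  rcases eq_or_ne w v with rfl | h
  · rw [heq]
  · exact mul_le_mul_of_nonneg_left (hle w) (hA v w (Ne.symm h))

lemma aux_nonneg_of_mulVec_nonpos {s : ℕ} (A : Matrix (Fin s) (Fin s) ℚ)
    (hA : ∀ v w, v ≠ w → 0 ≤ A v w)
    (hneg : ∀ x : Fin s → ℚ, x ≠ 0 → x ⬝ᵥ (A *ᵥ x) < 0)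
    (x : Fin s → ℚ) (hx : ∀ v, (A *ᵥ x) v ≤ 0) : ∀ v, 0 ≤ x v := by
  set m : Fin s → ℚ := fun v => min (x v) 0 with hm
  have hmle : ∀ w, m w ≤ x w := fun w => min_le_left _ _
  have hm0 : ∀ w, m w ≤ 0 := fun w => min_le_right _ _
  have key : m = 0 := by
    by_contra h0
    have hlt := hneg m h0
    have hge : 0 ≤ m ⬝ᵥ (A *ᵥ m) := by
      rw [dotProduct]
      apply Finset.sum_nonneg
      intro v _
      rcases lt_or_eq_of_le (hm0 v) with hv | hv
      · have hxv : x v < 0 := by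
          by_contra hxv; push_neg at hxv
          have h1 : m v = 0 := min_eq_right hxv
          exact absurd h1 (ne_of_lt hv)
        have hmv : m v = x v := min_eq_left hxv.le
        have h2 : (A *ᵥ m) v ≤ 0 :=
          (aux_mulVec_coord_le A hA x m hmle v hmv).trans (hx v)
        nlinarith
      · rw [hv, zero_mul]
    exact absurd hlt (not_lt.mpr hge)
  intro v
  have h := congrFun key v
  exact min_eq_right_iff.mp h

lemma aux_mulVec_int {s : ℕ} (B : Matrix (Fin s) (Fin s) ℤ) (l'0 x : Fin s → ℚ)
    (hl'0 : ∀ v, ∃ z : ℤ, ((B.map (Int.cast : ℤ → ℚ)) *ᵥ l'0) v = z)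
    (hx : ∀ v, ∃ z : ℤ, x v - l'0 v = z) :
    ∀ v, ∃ z : ℤ, ((B.map (Int.cast : ℤ → ℚ)) *ᵥ x) v = z := by
  choose g hg using hx
  intro v
  obtain ⟨c, hc⟩ := hl'0 v
  refine ⟨c + ∑ w, B v w * g w, ?_⟩
  have hxe : x = l'0 + fun w => ((g w : ℤ) : ℚ) :=
    funext fun w => by have := hg w; simp only [Pi.add_apply]; linarith
  rw [hxe, Matrix.mulVec_add, Pi.add_apply, hc]
  have hBg : (B.map (Int.cast : ℤ → ℚ)) *ᵥ (fun w => ((g w : ℤ) : ℚ))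
      = fun u => ((∑ w, B u w * g w : ℤ) : ℚ) := by
    funext u
    simp [Matrix.mulVec, dotProduct, Matrix.map_apply]
  rw [hBg]
  push_cast
  ring

lemma aux_exists_mem {s : ℕ} (B : Matrix (Fin s) (Fin s) ℤ)
    (hneg : ∀ x : Fin s → ℚ, x ≠ 0 →
      x ⬝ᵥ ((B.map (Int.cast : ℤ → ℚ)) *ᵥ x) < 0)
    (l'0 : Fin s → ℚ) :
    ∃ x : Fin s → ℚ,
      (∀ v, ∃ z : ℤ, x v - l'0 v = z) ∧
      (∀ v, ((B.map (Int.cast : ℤ → ℚ)) *ᵥ x) v ≤ 0) := by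
  have hinj : Function.Injective (B.map (Int.cast : ℤ → ℚ)).mulVecLin := by
    rw [injective_iff_map_eq_zero]
    intro z hz
    by_contra h0
    have h := hneg z h0
    rw [Matrix.mulVecLin_apply] at hz
    rw [hz] at h
    simp at h
  have hsurj : Function.Surjective (B.map (Int.cast : ℤ → ℚ)).mulVecLin :=
    LinearMap.injective_iff_surjective.mp hinj
  obtain ⟨z, hz⟩ := hsurj (fun _ => (-1 : ℚ))
  rw [Matrix.mulVecLin_apply] at hz
  obtain ⟨N, hNpos, e, he_int, hAe⟩ :
      ∃ N : ℕ, 0 < N ∧ ∃ e : Fin s → ℚ, (∀ v, ∃ k : ℤ, e v = k) ∧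
        (∀ v, ((B.map (Int.cast : ℤ → ℚ)) *ᵥ e) v = -(N : ℚ)) := by
    refine ⟨∏ v, (z v).den, Finset.prod_pos (fun v _ => (z v).pos),
      fun v => ((∏ v, (z v).den : ℕ) : ℚ) * z v, ?_, ?_⟩
    · intro v
      refine ⟨(((∏ w, (z w).den) / (z v).den : ℕ) : ℤ) * (z v).num, ?_⟩
      have hdvd : (z v).den ∣ ∏ w, (z w).den :=
        Finset.dvd_prod_of_mem _ (Finset.mem_univ v)
      have hNe : ((∏ w, (z w).den : ℕ) : ℚ)
          = (((∏ w, (z w).den) / (z v).den : ℕ) : ℚ) * ((z v).den : ℚ) := by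
        exact_mod_cast congrArg (Nat.cast : ℕ → ℚ) (Nat.div_mul_cancel hdvd).symm
      have hden : ((z v).den : ℚ) * z v = (z v).num := by
        rw [mul_comm]; exact_mod_cast Rat.mul_den_eq_num (z v)
      show ((∏ w, (z w).den : ℕ) : ℚ) * z v = _
      rw [hNe, mul_assoc, hden]
      rw [Int.cast_mul, Int.cast_natCast]
    · intro v
      have h1 : (B.map (Int.cast : ℤ → ℚ)) *ᵥ
          (fun v => ((∏ w, (z w).den : ℕ) : ℚ) * z v)
          = ((∏ w, (z w).den : ℕ) : ℚ) • ((B.map (Int.cast : ℤ → ℚ)) *ᵥ z) := by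
        rw [show (fun v => ((∏ w, (z w).den : ℕ) : ℚ) * z v)
            = ((∏ w, (z w).den : ℕ) : ℚ) • z from rfl, Matrix.mulVec_smul]
      rw [h1, hz]
      simp
  have hNQ : (0 : ℚ) < (N : ℚ) := by exact_mod_cast hNpos
  obtain ⟨k, hkN⟩ : ∃ k : ℤ, ∀ v, ((B.map (Int.cast : ℤ → ℚ)) *ᵥ l'0) v ≤ (k : ℚ) * N := by
    refine ⟨⌈(∑ v, max (((B.map (Int.cast : ℤ → ℚ)) *ᵥ l'0) v) 0) / (N : ℚ)⌉, fun v => ?_⟩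
    have h2 : ((B.map (Int.cast : ℤ → ℚ)) *ᵥ l'0) v
        ≤ ∑ w, max (((B.map (Int.cast : ℤ → ℚ)) *ᵥ l'0) w) 0 :=
      le_trans (le_max_left _ _)
        (Finset.single_le_sum (f := fun w => max (((B.map (Int.cast : ℤ → ℚ)) *ᵥ l'0) w) 0)
          (fun w _ => le_max_right _ _) (Finset.mem_univ v))
    have h1 := Int.le_ceil ((∑ w, max (((B.map (Int.cast : ℤ → ℚ)) *ᵥ l'0) w) 0) / (N : ℚ))
    rw [div_le_iff₀ hNQ] at h1
    linarith
  refine ⟨l'0 + (k : ℚ) • e, ?_, ?_⟩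
  · intro v
    obtain ⟨kv, hkv⟩ := he_int v
    refine ⟨k * kv, ?_⟩
    simp only [Pi.add_apply, Pi.smul_apply, smul_eq_mul, hkv]
    push_cast
    ring
  · intro v
    rw [Matrix.mulVec_add, Matrix.mulVec_smul, Pi.add_apply, Pi.smul_apply, hAe v]
    have := hkN v
    simp only [smul_eq_mul]
    linarith

end LipmanAux

/-- Let `L = ℤ^s` be negative definite with the usual resolution-graph structure
(`B v w ∈ {0,1}` for `v ≠ w`, diagonal entries `≤ -1`, connected graph), `L'` the dual
lattice and `h ∈ H = L'/L` a class represented by `l'₀ ∈ L'`.  Then the set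
`{l' ∈ L' : [l'] = h} ∩ S'` (where `S'` is the Lipman cone) has a unique minimal
element `s_h` for the coordinatewise order, and moreover `s_h ≥ r_h`, where `r_h` is
the representative of `h` with all coordinates in `[0,1)`. -/
theorem exists_minimal_Lipman_representative (s : ℕ)
    (B : Matrix (Fin s) (Fin s) ℤ) (hsym : B.IsSymm)
    (hneg : ∀ x : Fin s → ℚ, x ≠ 0 →
      x ⬝ᵥ ((B.map (Int.cast : ℤ → ℚ)) *ᵥ x) < 0)
    (hdiag : ∀ v, B v v ≤ -1)
    (hoff : ∀ v w : Fin s, v ≠ w → B v w = 0 ∨ B v w = 1)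
    (hconn : (SimpleGraph.fromRel (fun v w : Fin s => B v w = 1)).Connected)
    (l'0 : Fin s → ℚ)
    (hl'0 : ∀ v, ∃ z : ℤ, ((B.map (Int.cast : ℤ → ℚ)) *ᵥ l'0) v = z) :
    ∃ sh : Fin s → ℚ,
      ((∀ v, ∃ z : ℤ, ((B.map (Int.cast : ℤ → ℚ)) *ᵥ sh) v = z) ∧
        (∀ v, ∃ z : ℤ, sh v - l'0 v = z) ∧
        (∀ v, ((B.map (Int.cast : ℤ → ℚ)) *ᵥ sh) v ≤ 0)) ∧
      (∀ x : Fin s → ℚ,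
        (∀ v, ∃ z : ℤ, ((B.map (Int.cast : ℤ → ℚ)) *ᵥ x) v = z) →
        (∀ v, ∃ z : ℤ, x v - l'0 v = z) →
        (∀ v, ((B.map (Int.cast : ℤ → ℚ)) *ᵥ x) v ≤ 0) →
        sh ≤ x) ∧
      (∀ r : Fin s → ℚ,
        (∀ v, ∃ z : ℤ, ((B.map (Int.cast : ℤ → ℚ)) *ᵥ r) v = z) →
        (∀ v, ∃ z : ℤ, r v - l'0 v = z) →
        (∀ v, 0 ≤ r v ∧ r v < 1) →
        r ≤ sh) := by
  have hA : ∀ v w : Fin s, v ≠ w → 0 ≤ (B.map (Int.cast : ℤ → ℚ)) v w := by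
    intro v w hvw
    rcases hoff v w hvw with h | h <;> simp [Matrix.map_apply, h]
  -- the set of candidates, as a predicate
  set P : (Fin s → ℚ) → Prop := fun x =>
    (∀ v, ∃ z : ℤ, x v - l'0 v = z) ∧
    (∀ v, ((B.map (Int.cast : ℤ → ℚ)) *ᵥ x) v ≤ 0) with hP
  obtain ⟨x₁, hx₁⟩ := aux_exists_mem B hneg l'0
  -- the set of values of ∑ (x v - l'0 v) over P
  set S : Set ℤ := {n : ℤ | ∃ x : Fin s → ℚ, P x ∧ (n : ℚ) = ∑ v, (x v - l'0 v)} with hS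
  have hsum_int : ∀ x : Fin s → ℚ, (∀ v, ∃ z : ℤ, x v - l'0 v = z) →
      ∃ n : ℤ, (n : ℚ) = ∑ v, (x v - l'0 v) := by
    intro x hx
    choose g hg using hx
    exact ⟨∑ v, g v, by push_cast [hg]; rfl⟩
  have hS_ne : ∃ n, n ∈ S := by
    obtain ⟨n, hn⟩ := hsum_int x₁ hx₁.1
    exact ⟨n, x₁, hx₁, hn⟩
  have hS_bdd : ∃ b : ℤ, ∀ n ∈ S, b ≤ n := by
    refine ⟨⌈-∑ v, l'0 v⌉, ?_⟩
    rintro n ⟨x, hxP, hn⟩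
    have hx0 : ∀ v, 0 ≤ x v :=
      aux_nonneg_of_mulVec_nonpos _ hA hneg x hxP.2
    have : (-∑ v, l'0 v) ≤ (n : ℚ) := by
      rw [hn, Finset.sum_sub_distrib]
      have : (0:ℚ) ≤ ∑ v, x v := Finset.sum_nonneg fun v _ => hx0 v
      linarith
    exact Int.ceil_le.mpr this
  obtain ⟨n0, ⟨x0, hx0P, hx0sum⟩, hn0min⟩ :=
    Int.exists_least_of_bdd hS_bdd hS_ne
  have hx0nonneg : ∀ v, 0 ≤ x0 v :=
    aux_nonneg_of_mulVec_nonpos _ hA hneg x0 hx0P.2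
  refine ⟨x0, ⟨aux_mulVec_int B l'0 x0 hl'0 hx0P.1, hx0P.1, hx0P.2⟩, ?_, ?_⟩
  · -- minimality
    intro y _ hy2 hy3
    set m : Fin s → ℚ := fun v => min (x0 v) (y v) with hm
    have hmle : ∀ w, m w ≤ x0 w := fun w => min_le_left _ _
    have hmley : ∀ w, m w ≤ y w := fun w => min_le_right _ _
    have hmP : P m := by
      constructor
      · intro v
        rcases le_total (x0 v) (y v) with h | h
        · rw [show m v = x0 v from min_eq_left h]; exact hx0P.1 v
        · rw [show m v = y v from min_eq_right h]; exact hy2 v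
      · intro v
        rcases le_total (x0 v) (y v) with h | h
        · exact (aux_mulVec_coord_le _ hA x0 m hmle v (min_eq_left h)).trans (hx0P.2 v)
        · exact (aux_mulVec_coord_le _ hA y m hmley v (min_eq_right h)).trans (hy3 v)
    obtain ⟨nm, hnm⟩ := hsum_int m hmP.1
    have hnmS : nm ∈ S := ⟨m, hmP, hnm⟩
    have h1 : n0 ≤ nm := hn0min nm hnmS
    have h2 : (nm : ℚ) ≤ (n0 : ℚ) := by
      rw [hnm, hx0sum]
      exact Finset.sum_le_sum fun v _ => by have := hmle v; linarith
    have h3 : (n0 : ℚ) = (nm : ℚ) := le_antisymm (by exact_mod_cast h1) h2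
    have hsums : ∑ v, (m v - l'0 v) = ∑ v, (x0 v - l'0 v) := by
      rw [← hnm, ← hx0sum, h3]
    have hcoord := (Finset.sum_eq_sum_iff_of_le
      (fun v _ => by have := hmle v; linarith : ∀ v ∈ Finset.univ, m v - l'0 v ≤ x0 v - l'0 v)).mp hsums
    intro v
    have hmv : m v = x0 v := by have := hcoord v (Finset.mem_univ v); linarith
    have : min (x0 v) (y v) = x0 v := hmv
    exact min_eq_left_iff.mp this
  · -- r ≤ sh for the [0,1) representative
    intro r _ hr2 hr3 v
    obtain ⟨z1, hz1⟩ := hx0P.1 v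
    obtain ⟨z2, hz2⟩ := hr2 v
    have hint : x0 v - r v = ((z1 - z2 : ℤ) : ℚ) := by push_cast; linarith
    have hgt : (-1 : ℚ) < ((z1 - z2 : ℤ) : ℚ) := by
      rw [← hint]
      have := hx0nonneg v
      have := (hr3 v).2
      linarith
    have hz : (0 : ℤ) ≤ z1 - z2 := by exact_mod_cast (by exact_mod_cast hgt : (-1:ℤ) < z1 - z2)
    have : (0 : ℚ) ≤ x0 v - r v := by rw [hint]; exact_mod_cast hz
    linarith
end

section
/- Let L ∈ Pic(X̃) be a line bundle on a resolution X̃ with h¹(X̃, L) > 0. Then the set L_L = {l ∈ L_{>0} : h¹(l, L) = h¹(X̃, L)} has a unique minimal element Z_coh(L) (the cohomological cycle of L), and h¹(l, L) < h¹(X̃, L) for every l ∈ L_{>0} with l ≱ Z_coh(L). -/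
/-- Existence of the cohomological cycle `Z_coh(𝓛)` of a line bundle `𝓛` on a resolution
`X̃` with `h¹(X̃,𝓛) > 0`.  Here `h1 l` stands for `h¹(l,𝓛)` (`l ∈ L_{≥0}`, coefficientwise
order, `h¹(0,𝓛) = 0`) and `h1top` for `h¹(X̃,𝓛)`; the hypotheses record the geometric
inputs: `h¹(l,𝓛) ≤ h¹(X̃,𝓛)`, monotonicity under inclusion of cycles, the opposite
matroid rank inequality, `h¹(l,𝓛) = h¹(X̃,𝓛)` for all large `l`, and the fact that for
disjointly supported `l₁, l₂` the map `H¹(𝓛|_{l₁+l₂}) → H¹(𝓛|_{l₁}) ⊕ H¹(𝓛|_{l₂})` is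
onto.  Conclusion: `L_𝓛 = {l > 0 : h¹(l,𝓛) = h¹(X̃,𝓛)}` has a unique minimal element
`Z_coh(𝓛)`, and `h¹(l,𝓛) < h¹(X̃,𝓛)` for every `l > 0` with `l ≱ Z_coh(𝓛)`. -/
theorem exists_cohomological_cycle (s : ℕ)
    (h1 : (Fin s → ℤ) → ℕ) (h1top : ℕ)
    (htop_pos : 0 < h1top)
    (hzero : h1 0 = 0)
    (hbound : ∀ l : Fin s → ℤ, 0 ≤ l → h1 l ≤ h1top)
    (hmono : ∀ l l' : Fin s → ℤ, 0 ≤ l → l ≤ l' → h1 l ≤ h1 l')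
    (hopp : ∀ l₁ l₂ : Fin s → ℤ, 0 ≤ l₁ → 0 ≤ l₂ →
      h1 l₁ + h1 l₂ ≤ h1 (l₁ ⊔ l₂) + h1 (l₁ ⊓ l₂))
    (hlarge : ∃ l₀ : Fin s → ℤ, 0 < l₀ ∧ ∀ l, l₀ ≤ l → h1 l = h1top)
    (hdisj : ∀ l₁ l₂ : Fin s → ℤ, 0 < l₁ → 0 < l₂ → l₁ ⊓ l₂ = 0 →
      h1 l₁ + h1 l₂ ≤ h1 (l₁ + l₂)) :
    ∃ Z : Fin s → ℤ, 0 < Z ∧ h1 Z = h1top ∧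
      (∀ l : Fin s → ℤ, 0 < l → h1 l = h1top → Z ≤ l) ∧
      (∀ l : Fin s → ℤ, 0 < l → ¬ Z ≤ l → h1 l < h1top) := by
  obtain ⟨l₀, hl₀pos, hl₀⟩ := hlarge
  have hl₀top : h1 l₀ = h1top := hl₀ l₀ le_rfl
  -- the set L_𝓛 is closed under infima
  have hinf : ∀ l₁ l₂ : Fin s → ℤ, (0 < l₁ ∧ h1 l₁ = h1top) →
      (0 < l₂ ∧ h1 l₂ = h1top) → (0 < l₁ ⊓ l₂ ∧ h1 (l₁ ⊓ l₂) = h1top) := by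
    rintro l₁ l₂ ⟨h1p, h1e⟩ ⟨h2p, h2e⟩
    have hle1 : 0 ≤ l₁ := h1p.le
    have hle2 : 0 ≤ l₂ := h2p.le
    have hO := hopp l₁ l₂ hle1 hle2
    have hsup : h1 (l₁ ⊔ l₂) ≤ h1top := hbound _ (le_trans hle1 le_sup_left)
    have h0le : (0 : Fin s → ℤ) ≤ l₁ ⊓ l₂ := le_inf hle1 hle2
    have hinfle : h1 (l₁ ⊓ l₂) ≤ h1top := hbound _ h0le
    have heq : h1 (l₁ ⊓ l₂) = h1top := by omega
    refine ⟨?_, heq⟩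
    rcases h0le.lt_or_eq with h | h
    · exact h
    · exfalso
      have hd := hdisj l₁ l₂ h1p h2p h.symm
      have hb := hbound (l₁ + l₂) (add_nonneg hle1 hle2)
      omega
  -- measure: sum of coordinates
  set f : (Fin s → ℤ) → ℕ := fun l => ∑ i, (l i).toNat with hf
  have fmono : ∀ a b : Fin s → ℤ, a ≤ b → f a ≤ f b := by
    intro a b hab
    exact Finset.sum_le_sum fun i _ => Int.toNat_le_toNat (hab i)
  have feq : ∀ a b : Fin s → ℤ, 0 ≤ a → a ≤ b → f a = f b → a = b := by
    intro a b ha hab hfe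
    by_contra hne
    have hlt : a < b := lt_of_le_of_ne hab hne
    obtain ⟨i, hi⟩ := (Pi.lt_def.mp hlt).2
    have : f a < f b := by
      refine Finset.sum_lt_sum (fun j _ => Int.toNat_le_toNat (hab j)) ⟨i, Finset.mem_univ i, ?_⟩
      have hbi : 0 < b i := lt_of_le_of_lt (ha i) hi
      omega
    omega
  -- pick a minimizer of f over L_𝓛
  have hEx : ∃ n : ℕ, ∃ l : Fin s → ℤ, (0 < l ∧ h1 l = h1top) ∧ f l = n :=
    ⟨f l₀, l₀, ⟨hl₀pos, hl₀top⟩, rfl⟩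
  classical
  obtain ⟨Z, ⟨hZpos, hZtop⟩, hZf⟩ := Nat.find_spec hEx
  have hmin : ∀ l : Fin s → ℤ, 0 < l → h1 l = h1top → Z ≤ l := by
    intro l hlpos hltop
    obtain ⟨hip, hie⟩ := hinf Z l ⟨hZpos, hZtop⟩ ⟨hlpos, hltop⟩
    have hle : Z ⊓ l ≤ Z := inf_le_left
    have h1' : f (Z ⊓ l) ≤ f Z := fmono _ _ hle
    have h2' : Nat.find hEx ≤ f (Z ⊓ l) := Nat.find_min' hEx ⟨Z ⊓ l, ⟨hip, hie⟩, rfl⟩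
    have : Z ⊓ l = Z := feq _ _ hip.le hle (by omega)
    exact inf_eq_left.mp this
  refine ⟨Z, hZpos, hZtop, hmin, ?_⟩
  intro l hlpos hnle
  have hb := hbound l hlpos.le
  rcases hb.lt_or_eq with h | h
  · exact h
  · exact absurd (hmin l hlpos h) hnle
end

section
/- In the setting of blowing up the intersection point of two components E_{v₀} and E_{v₁} of a resolution, write r_h = Σ_v a_v E_v with all a_v ∈ [0,1) for the canonical representative of h ∈ H in L'(Γ), and define π*(Σ x_v E_v) = Σ x_v E_v + (x_{v₀}+x_{v₁}) E_new. Then the canonical representative r'_h in L'(Γ') equals π*(r_h) if a_{v₀} + a_{v₁} < 1, and equals π*(r_h) - E_new if a_{v₀} + a_{v₁} ≥ 1. -/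
open Matrix

lemma int_diff_eq {a b : ℚ} (z : ℤ) (hz : a - b = z) (ha : 0 ≤ a) (ha' : a < 1)
    (hb : 0 ≤ b) (hb' : b < 1) : a = b := by
  have h1 : (z : ℚ) < 1 := by linarith
  have h2 : (-1 : ℚ) < z := by linarith
  have : z = 0 := by exact_mod_cast le_antisymm (by exact_mod_cast Int.lt_add_one_iff.mp (by exact_mod_cast h1)) (by exact_mod_cast h2)
  simp [this] at hz; linarith

/-- Blow up of the intersection point of two components `E_{v₀}`, `E_{v₁}` of a
resolution.  Write `r_h = Σ_v a_v E_v` (all `a_v ∈ [0,1)`) for the canonical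
representative of `h ∈ H` in `L'(Γ)`, and `π*(Σ x_v E_v) = Σ x_v E_v + (x_{v₀}+x_{v₁}) E_new`
(realized by `Fin.snoc x (x v₀ + x v₁)`).  The canonical representative `r'_h ∈ L'(Γ')`
(characterized among rational cycles by having all coordinates in `[0,1)` and differing
from `π* r_h` by an integral cycle) equals `π*(r_h)` if `a_{v₀} + a_{v₁} < 1`, and
equals `π*(r_h) - E_new` if `a_{v₀} + a_{v₁} ≥ 1`. -/
theorem blowup_canonical_representative (s : ℕ)
    (B : Matrix (Fin s) (Fin s) ℤ) (hsym : B.IsSymm)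
    (v0 v1 : Fin s) (hne : v0 ≠ v1) (hedge : B v0 v1 = 1)
    (rh : Fin s → ℚ)
    (hdual : ∀ v, ∃ z : ℤ, ((B.map (Int.cast : ℤ → ℚ)) *ᵥ rh) v = z)
    (hr : ∀ v, 0 ≤ rh v ∧ rh v < 1)
    (r' : Fin (s + 1) → ℚ)
    (hr' : ∀ i, 0 ≤ r' i ∧ r' i < 1)
    (hclass : ∀ i, ∃ z : ℤ, r' i - (Fin.snoc rh (rh v0 + rh v1) : Fin (s + 1) → ℚ) i = z) :
    (rh v0 + rh v1 < 1 → r' = (Fin.snoc rh (rh v0 + rh v1) : Fin (s + 1) → ℚ)) ∧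
    (1 ≤ rh v0 + rh v1 →
      r' = (Fin.snoc rh (rh v0 + rh v1) : Fin (s + 1) → ℚ) - Pi.single (Fin.last s) 1) := by
  have hcast : ∀ i : Fin s, r' (Fin.castSucc i) = rh i := by
    intro i
    obtain ⟨z, hz⟩ := hclass (Fin.castSucc i)
    rw [Fin.snoc_castSucc] at hz
    exact int_diff_eq z hz (hr' _).1 (hr' _).2 (hr i).1 (hr i).2
  constructor
  · intro hsum
    funext i
    refine Fin.lastCases ?_ (fun j => by rw [Fin.snoc_castSucc]; exact hcast j) i
    obtain ⟨z, hz⟩ := hclass (Fin.last s)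
    rw [Fin.snoc_last] at hz
    rw [Fin.snoc_last]
    have h0 : 0 ≤ rh v0 + rh v1 := by have := (hr v0).1; have := (hr v1).1; linarith
    exact int_diff_eq z hz (hr' _).1 (hr' _).2 h0 hsum
  · intro hsum
    funext i
    refine Fin.lastCases ?_ ?_ i
    · obtain ⟨z, hz⟩ := hclass (Fin.last s)
      rw [Fin.snoc_last] at hz
      simp only [Pi.sub_apply, Fin.snoc_last, Pi.single_eq_same]
      have hlt2 : rh v0 + rh v1 < 2 := by have := (hr v0).2; have := (hr v1).2; linarith
      have h1 : (z : ℚ) < 0 := by have := (hr' (Fin.last s)).2; linarith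
      have h2 : (-2 : ℚ) < z := by have := (hr' (Fin.last s)).1; linarith
      have : z = -1 := by
        have : z < 0 := by exact_mod_cast h1
        have : (-2 : ℤ) < z := by exact_mod_cast h2
        omega
      rw [this] at hz; push_cast at hz; linarith
    · intro i
      simp only [Pi.sub_apply, Fin.snoc_castSucc]
      rw [Pi.single_eq_of_ne (by simp [Fin.ext_iff, i.isLt.ne]) , hcast i]
      ring
end
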